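/- arXiv:2011.05660 — 2 statements merged into one kernel-verified Lean document; each statement's English description precedes it below -/
import Mathlib

section
/- Let G be a group and a, b ∈ G satisfy a·b·a = b·a·b and a·b²·a = b (the case n = 3). Then a⁶ = 1. -/
/-!
Put `Δ = a b a = b a b`. Conjugation by `Δ` swaps `a` and `b`, so the relations are symmetric:
also `b a² b = a`. Now `a b² a = b` gives both `(b a b)² = b³` and `(a⁻¹ b)² = b³`, and
symmetrically `(a b a)² = a³` and `(b⁻¹ a)² = a³`. The first pair yields `a³ = Δ² = b³`; the
second, since `b⁻¹ a = (a⁻¹ b)⁻¹`, yields `a³ = b⁻³`. Hence `a⁶ = b³ b⁻³ = 1`.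
-/

section

variable {G : Type*} [Group G] {a b : G}

lemma conj_braid_left (hbraid : a * b * a = b * a * b) :
    MulAut.conj (a * b * a) a = b := by
  rw [MulAut.conj_apply, mul_inv_eq_iff_eq_mul]
  conv_lhs => rw [hbraid]
  group

lemma conj_braid_right (hbraid : a * b * a = b * a * b) :
    MulAut.conj (a * b * a) b = a := by
  rw [MulAut.conj_apply, mul_inv_eq_iff_eq_mul]
  conv_rhs => rw [hbraid]
  group

lemma mul_sq_mul_swap_of_braid (hbraid : a * b * a = b * a * b) (h : a * b ^ 2 * a = b) :
    b * a ^ 2 * b = a := by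
  calc b * a ^ 2 * b = MulAut.conj (a * b * a) (a * b ^ 2 * a) := by
        rw [map_mul (MulAut.conj _), map_mul (MulAut.conj _), map_pow, conj_braid_left hbraid,
          conj_braid_right hbraid]
    _ = a := by rw [h, conj_braid_right hbraid]

lemma sq_mul_mul_eq_pow_three (h : a * b ^ 2 * a = b) : (b * a * b) ^ 2 = b ^ 3 := by
  calc (b * a * b) ^ 2 = b * (a * b ^ 2 * a) * b := by simp only [sq, mul_assoc]
    _ = b ^ 3 := by rw [h, pow_three, mul_assoc]

lemma inv_mul_sq_eq_pow_three (h : a * b ^ 2 * a = b) : (a⁻¹ * b) ^ 2 = b ^ 3 := by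
  have hb : a⁻¹ * b * a⁻¹ = b ^ 2 := by
    rw [mul_inv_eq_iff_eq_mul, inv_mul_eq_iff_eq_mul, ← mul_assoc, h]
  calc (a⁻¹ * b) ^ 2 = a⁻¹ * b * a⁻¹ * b := by rw [sq, ← mul_assoc]
    _ = b ^ 3 := by rw [hb, ← pow_succ]

end

theorem a_pow_six_eq_one {G : Type*} [Group G] (a b : G)
    (hbraid : a * b * a = b * a * b) (hrel : a * b ^ 2 * a = b) : a ^ 6 = 1 := by
  have hrel' : b * a ^ 2 * b = a := mul_sq_mul_swap_of_braid hbraid hrel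
  have hcube : a ^ 3 = b ^ 3 := by
    rw [← sq_mul_mul_eq_pow_three hrel', hbraid, sq_mul_mul_eq_pow_three hrel]
  have hcube_inv : a ^ 3 = (b ^ 3)⁻¹ := by
    rw [← inv_mul_sq_eq_pow_three hrel', ← inv_mul_sq_eq_pow_three hrel, ← inv_pow, mul_inv_rev,
      inv_inv]
  calc a ^ 6 = a ^ 3 * a ^ 3 := by group
    _ = b ^ 3 * (b ^ 3)⁻¹ := congrArg₂ (· * ·) hcube hcube_inv
    _ = 1 := mul_inv_cancel _
end

section
/- Let G be a group and a, b ∈ G satisfy a·b·a = b·a·b and a·b²·a = b^(n-2) for some n ≥ 4. Then aⁿ = (b^(n-4)·a⁻¹)ⁿ. -/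
/-!
Put `Δ = a * b * a`. The braid relation says that conjugation by `Δ` swaps `a` and `b`, so `Δ ^ 2`
is central. Conjugating `a * b ^ 2 * a = b ^ (n - 2)` by `Δ` gives `a ^ n = Δ ^ 2`. On the other
hand the same relation rewrites `b ^ (n - 4) * a⁻¹` as the conjugate of `a` by `a * b ^ 2`, so its
`n`-th power is a conjugate of the central element `a ^ n`.
-/

section Braid

variable {G : Type*} [Group G] {a b : G}

theorem semiconjBy_braid_left (hbraid : a * b * a = b * a * b) : SemiconjBy (a * b * a) a b := by
  simp only [SemiconjBy, ← mul_assoc]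
  rw [← hbraid]

theorem semiconjBy_braid_right (hbraid : a * b * a = b * a * b) :
    SemiconjBy (a * b * a) b a := by
  simp only [SemiconjBy, mul_assoc] at hbraid ⊢
  rw [← hbraid]

theorem commute_braid_sq (hbraid : a * b * a = b * a * b) : Commute ((a * b * a) ^ 2) b := by
  rw [pow_two]
  exact (semiconjBy_braid_left hbraid).mul_left (semiconjBy_braid_right hbraid)

theorem pow_add_two_eq_braid_sq (hbraid : a * b * a = b * a * b) {m : ℕ}
    (hrel : a * b ^ 2 * a = b ^ m) : a ^ (m + 2) = (a * b * a) ^ 2 := by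
  have hconj : (a * b * a) * a ^ m = a * b ^ 2 * a * (a * b * a) := by
    rw [hrel]; exact (semiconjBy_braid_left hbraid).pow_right m
  calc a ^ (m + 2) = a ^ 2 * ((a * b * a)⁻¹ * ((a * b * a) * a ^ m)) := by group
    _ = (a * b * a) ^ 2 := by rw [hconj, sq (a * b * a)]; group

end Braid

theorem a_pow_formula {G : Type*} [Group G] (a b : G) (n : ℕ) (hn : 4 ≤ n)
    (hbraid : a * b * a = b * a * b) (hrel : a * b ^ 2 * a = b ^ (n - 2)) :
    a ^ n = (b ^ (n - 4) * a⁻¹) ^ n := by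
  obtain ⟨m, rfl⟩ := Nat.exists_eq_add_of_le' hn
  rw [show m + 4 - 2 = m + 2 by omega] at hrel
  have hpow : a ^ (m + 4) = (a * b * a) ^ 2 := pow_add_two_eq_braid_sq hbraid hrel
  have hcentral : Commute (a ^ (m + 4)) (a * b ^ 2) :=
    ((Commute.refl a).pow_left _).mul_right ((hpow ▸ commute_braid_sq hbraid).pow_right 2)
  have hconj : b ^ m * a⁻¹ = (a * b ^ 2) * a * (a * b ^ 2)⁻¹ := by
    rw [← mul_inv_cancel_right (b ^ m) (b ^ 2), ← pow_add, ← hrel]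
    group
  rw [Nat.add_sub_cancel, hconj, conj_pow, ← hcentral.eq, mul_inv_cancel_right]
end
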